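/- Let p ∈ (0,1), and let K₁ ≥ 1, K₂ ≥ 0 be integers. Then ∑_{k₁=1}^{K₁} ∑_{k₂=0}^{K₂} C(K₁,k₁) C(K₂,k₂) p^{k₁+k₂} (1-p)^{K₁+K₂-k₁-k₂} (1-(1-p)^{k₁+k₂}) + ∑_{k₂=2}^{K₂} C(K₂,k₂) p^{k₂}(1-p)^{K₂-k₂}(1-(1-p)^{k₂}) = K₁·p²(1-p)·(1 + o(1)) + o(p²) as p → 0; in particular this quantity is asymptotically at most K₁ p² as p → 0, and strictly less than (K₁+1)p² for all sufficiently small p. -/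
import Mathlib


open Filter

private lemma key16 (n : ℕ) (hn : 1 ≤ n) (p : ℝ) :
    p ^ n * (1 - (1 - p) ^ n) =
      p ^ 2 * (p ^ (n - 1) * ∑ i ∈ Finset.range n, (1 - p) ^ i) := by
  have h1 : 1 - (1 - p) ^ n = p * ∑ i ∈ Finset.range n, (1 - p) ^ i := by
    have h := geom_sum_mul (1 - p) n
    linear_combination h
  obtain ⟨m, rfl⟩ : ∃ m, n = m + 1 := ⟨n - 1, by omega⟩
  rw [h1]
  simp only [Nat.add_sub_cancel, pow_succ]
  ring

/-- Low-SNR asymptotics of the selection upper bound on the recovery probability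
of an allocation with `K₁` complete and `K₂` incomplete nodes: as `p → 0⁺`, the
quantity is `K₁ p² (1 + o(1))`, hence eventually strictly less than `(K₁+1) p²`. -/
theorem stmt16 (K₁ K₂ : ℕ) (hK₁ : 1 ≤ K₁)
    (F : ℝ → ℝ)
    (hF : F = fun p =>
      (∑ k₁ ∈ Finset.Icc 1 K₁, ∑ k₂ ∈ Finset.range (K₂ + 1),
        (K₁.choose k₁ : ℝ) * (K₂.choose k₂ : ℝ) * p ^ (k₁ + k₂) *
          (1 - p) ^ (K₁ + K₂ - k₁ - k₂) * (1 - (1 - p) ^ (k₁ + k₂))) +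
      ∑ k₂ ∈ Finset.Icc 2 K₂,
        (K₂.choose k₂ : ℝ) * p ^ k₂ * (1 - p) ^ (K₂ - k₂) * (1 - (1 - p) ^ k₂)) :
    Tendsto (fun p => F p / p ^ 2) (nhdsWithin 0 (Set.Ioi 0)) (nhds (K₁ : ℝ)) ∧
      ∀ᶠ p in nhdsWithin (0 : ℝ) (Set.Ioi 0), F p < (K₁ + 1 : ℝ) * p ^ 2 := by
  set G : ℝ → ℝ := fun p =>
      (∑ k₁ ∈ Finset.Icc 1 K₁, ∑ k₂ ∈ Finset.range (K₂ + 1),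
        (K₁.choose k₁ : ℝ) * (K₂.choose k₂ : ℝ) * p ^ (k₁ + k₂ - 1) *
          (1 - p) ^ (K₁ + K₂ - k₁ - k₂) * (∑ i ∈ Finset.range (k₁ + k₂), (1 - p) ^ i)) +
      ∑ k₂ ∈ Finset.Icc 2 K₂,
        (K₂.choose k₂ : ℝ) * p ^ (k₂ - 1) * (1 - p) ^ (K₂ - k₂) *
          (∑ i ∈ Finset.range k₂, (1 - p) ^ i) with hG
  have hFG : ∀ p : ℝ, F p = p ^ 2 * G p := by
    intro p
    have hA : (∑ k₁ ∈ Finset.Icc 1 K₁, ∑ k₂ ∈ Finset.range (K₂ + 1),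
        (K₁.choose k₁ : ℝ) * (K₂.choose k₂ : ℝ) * p ^ (k₁ + k₂) *
          (1 - p) ^ (K₁ + K₂ - k₁ - k₂) * (1 - (1 - p) ^ (k₁ + k₂))) =
        p ^ 2 * ∑ k₁ ∈ Finset.Icc 1 K₁, ∑ k₂ ∈ Finset.range (K₂ + 1),
        (K₁.choose k₁ : ℝ) * (K₂.choose k₂ : ℝ) * p ^ (k₁ + k₂ - 1) *
          (1 - p) ^ (K₁ + K₂ - k₁ - k₂) * (∑ i ∈ Finset.range (k₁ + k₂), (1 - p) ^ i) := by
      rw [Finset.mul_sum]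
      refine Finset.sum_congr rfl fun k₁ hk₁ => ?_
      rw [Finset.mul_sum]
      refine Finset.sum_congr rfl fun k₂ _ => ?_
      have h1 : 1 ≤ k₁ := (Finset.mem_Icc.mp hk₁).1
      have := key16 (k₁ + k₂) (by omega) p
      linear_combination ((K₁.choose k₁ : ℝ) * (K₂.choose k₂ : ℝ) *
        (1 - p) ^ (K₁ + K₂ - k₁ - k₂)) * this
    have hB : (∑ k₂ ∈ Finset.Icc 2 K₂,
        (K₂.choose k₂ : ℝ) * p ^ k₂ * (1 - p) ^ (K₂ - k₂) * (1 - (1 - p) ^ k₂)) =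
        p ^ 2 * ∑ k₂ ∈ Finset.Icc 2 K₂,
        (K₂.choose k₂ : ℝ) * p ^ (k₂ - 1) * (1 - p) ^ (K₂ - k₂) *
          (∑ i ∈ Finset.range k₂, (1 - p) ^ i) := by
      rw [Finset.mul_sum]
      refine Finset.sum_congr rfl fun k₂ hk₂ => ?_
      have h2 : 2 ≤ k₂ := (Finset.mem_Icc.mp hk₂).1
      have := key16 k₂ (by omega) p
      linear_combination ((K₂.choose k₂ : ℝ) * (1 - p) ^ (K₂ - k₂)) * this
    simp only [hF, hG]
    rw [mul_add, hA, hB]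
  have hGc : Continuous G := by
    rw [hG]
    apply Continuous.add
    · exact continuous_finset_sum _ fun k₁ _ => continuous_finset_sum _ fun k₂ _ => by
        fun_prop
    · exact continuous_finset_sum _ fun k₂ _ => by fun_prop
  have hG0 : G 0 = K₁ := by
    rw [hG]
    simp only [sub_zero, one_pow, Finset.sum_const, Finset.card_range, nsmul_eq_mul,
      mul_one]
    have hz : ∀ k₂ ∈ Finset.Icc 2 K₂,
        (K₂.choose k₂ : ℝ) * (0:ℝ) ^ (k₂ - 1) * (k₂ : ℝ) = 0 := by
      intro k₂ hk₂
      have h2 : 2 ≤ k₂ := (Finset.mem_Icc.mp hk₂).1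
      rw [zero_pow (by omega)]
      ring
    rw [Finset.sum_eq_zero hz, add_zero]
    rw [Finset.sum_eq_single 1]
    · rw [Finset.sum_eq_single 0]
      · simp
      · intro k₂ _ hk₂
        rw [zero_pow (by omega)]
        ring
      · intro h; simp at h
    · intro k₁ hk₁ hne
      have h1 : 1 ≤ k₁ := (Finset.mem_Icc.mp hk₁).1
      refine Finset.sum_eq_zero fun k₂ _ => ?_
      rw [zero_pow (by omega)]
      ring
    · intro h
      exact absurd (Finset.mem_Icc.mpr ⟨le_refl 1, hK₁⟩) h
  have htend : Tendsto (fun p => F p / p ^ 2) (nhdsWithin 0 (Set.Ioi 0)) (nhds (K₁ : ℝ)) := by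
    have h1 : Tendsto G (nhdsWithin 0 (Set.Ioi 0)) (nhds (K₁ : ℝ)) := by
      rw [← hG0]
      exact (hGc.tendsto 0).mono_left nhdsWithin_le_nhds
    refine h1.congr' ?_
    filter_upwards [self_mem_nhdsWithin] with p hp
    have hp0 : p ≠ 0 := ne_of_gt hp
    rw [hFG p, mul_comm, mul_div_assoc, div_self (pow_ne_zero 2 hp0), mul_one]
  refine ⟨htend, ?_⟩
  have hlt : ∀ᶠ p in nhdsWithin (0:ℝ) (Set.Ioi 0), F p / p ^ 2 < (K₁ + 1 : ℝ) := by
    apply htend.eventually_lt_const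
    norm_num
  filter_upwards [hlt, self_mem_nhdsWithin] with p h1 h2
  have hp : (0:ℝ) < p := h2
  have hp2 : (0:ℝ) < p ^ 2 := by positivity
  calc F p = (F p / p ^ 2) * p ^ 2 := by field_simp
    _ < (K₁ + 1 : ℝ) * p ^ 2 := by
        exact mul_lt_mul_of_pos_right h1 hp2
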